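/- arXiv:2204.05466 — 2 statements merged into one kernel-verified Lean document; each statement's English description precedes it below -/
import Mathlib

section
/- The independent entropy-regularized NPG update guarantees, for every t ≥ 0, Φ_τ(π^(t+1)) − Φ_τ(π^(t)) ≥ (1/η − 2Φ_max − τ) · J(π^(t+1), π^(t)). -/
open Finset

noncomputable section

/-- A probability distribution on a finite action set. -/
def IsDist {A : Type*} [Fintype A] (p : A → ℝ) : Prop :=
  (∀ a, 0 ≤ p a) ∧ ∑ a, p a = 1

/-- Shannon entropy of a distribution. -/
def entropy {A : Type*} [Fintype A] (p : A → ℝ) : ℝ :=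
  -∑ a, p a * Real.log (p a)

/-- Kullback-Leibler divergence on a finite set. -/
def KLdiv {A : Type*} [Fintype A] (p q : A → ℝ) : ℝ :=
  ∑ a, p a * (Real.log (p a) - Real.log (q a))

/-- Jeffrey divergence: the symmetrized KL divergence. -/
def Jdiv {A : Type*} [Fintype A] (p q : A → ℝ) : ℝ :=
  KLdiv p q + KLdiv q p

/-- Joint product distribution induced by a product policy. -/
def jointPmf {N : ℕ} {A : Type*} [Fintype A] (π : Fin N → A → ℝ) :
    (Fin N → A) → ℝ :=
  fun a => ∏ i, π i (a i)

/-- Expectation of `f` under the product policy `π`. -/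
def expVal {N : ℕ} {A : Type*} [Fintype A] (π : Fin N → A → ℝ)
    (f : (Fin N → A) → ℝ) : ℝ :=
  ∑ a, jointPmf π a * f a

/-- Point mass at action `a`. -/
def pmfOf {A : Type*} [DecidableEq A] (a : A) : A → ℝ :=
  fun b => if b = a then 1 else 0

/-- Marginalized utility `r_i^π(a) = E_{a_{-i} ∼ π_{-i}}[u_i(a, a_{-i})]`. -/
def margU {N : ℕ} {A : Type*} [Fintype A] [DecidableEq A]
    (u : Fin N → (Fin N → A) → ℝ) (π : Fin N → A → ℝ) (i : Fin N) (a : A) : ℝ :=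
  expVal (Function.update π i (pmfOf a)) (u i)

/-- Entropy-regularized utility `u_{i,τ}(π) = u_i(π) + τ H(π_i)`. -/
def uReg {N : ℕ} {A : Type*} [Fintype A] (u : Fin N → (Fin N → A) → ℝ) (τ : ℝ)
    (i : Fin N) (π : Fin N → A → ℝ) : ℝ :=
  expVal π (u i) + τ * entropy (π i)

/-- `QRE-gap_τ(π)`. -/
def QREgap {N : ℕ} {A : Type*} [Fintype A] [DecidableEq A]
    (u : Fin N → (Fin N → A) → ℝ) (τ : ℝ) (π : Fin N → A → ℝ) : ℝ :=
  sSup {x | ∃ (i : Fin N) (p : A → ℝ), IsDist p ∧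
    x = uReg u τ i (Function.update π i p) - uReg u τ i π}

/-- `NE-gap(π)`. -/
def NEgap {N : ℕ} {A : Type*} [Fintype A] [DecidableEq A]
    (u : Fin N → (Fin N → A) → ℝ) (π : Fin N → A → ℝ) : ℝ :=
  sSup {x | ∃ (i : Fin N) (p : A → ℝ), IsDist p ∧
    x = expVal (Function.update π i p) (u i) - expVal π (u i)}

/-- Entropy-regularized potential `Φ_τ(π) = Φ(π) + τ ∑_i H(π_i)`. -/
def regPot {N : ℕ} {A : Type*} [Fintype A] (Φ : (Fin N → A) → ℝ) (τ : ℝ)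
    (π : Fin N → A → ℝ) : ℝ :=
  expVal π Φ + τ * ∑ i, entropy (π i)

/-- `Φ` is a potential function for the game with utilities `u`. -/
def IsPotential {N : ℕ} {A : Type*} [Fintype A] [DecidableEq A]
    (u : Fin N → (Fin N → A) → ℝ) (Φ : (Fin N → A) → ℝ) : Prop :=
  ∀ (i : Fin N) (a : Fin N → A) (a' : A),
    u i a - u i (Function.update a i a') = Φ a - Φ (Function.update a i a')

/-- The independent entropy-regularized NPG update rule. -/
def NPGstep {N : ℕ} {A : Type*} [Fintype A] [DecidableEq A]
    (u : Fin N → (Fin N → A) → ℝ) (τ η : ℝ) (π : ℕ → Fin N → A → ℝ) : Prop :=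
  ∀ t i a, π (t+1) i a =
    π t i a ^ (1 - η * τ) * Real.exp (η * margU u (π t) i a) /
      ∑ a', π t i a' ^ (1 - η * τ) * Real.exp (η * margU u (π t) i a')

/-- Best-response policy `π_i^⋆(a) ∝ exp(r_i^π(a)/τ)`. -/
def bestResp {N : ℕ} {A : Type*} [Fintype A] [DecidableEq A]
    (u : Fin N → (Fin N → A) → ℝ) (τ : ℝ) (π : Fin N → A → ℝ) (i : Fin N) :
    A → ℝ :=
  fun a => Real.exp (margU u π i a / τ) / ∑ a', Real.exp (margU u π i a' / τ)

/-!
Write `p` for the current and `q` for the next iterate, `ℓᵢ = log qᵢ - log pᵢ`. Since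
`q(a) = p(a) · exp (∑ᵢ ℓᵢ(aᵢ))` and `Φ ≥ 0`, the bound `exp x ≥ 1 + x` gives
`Φ(q) ≥ Φ(p) + ∑ᵢ E_p[ℓᵢ(aᵢ) Φ(a)]`. Replacing `pᵢ ℓᵢ` by `qᵢ - pᵢ` costs at most
`Φmax · KL(pᵢ‖qᵢ)`, and the potential property turns the resulting first-order term into
`⟨qᵢ - pᵢ, rᵢ⟩`. Taking logarithms in the update rule,
`η ⟨qᵢ - pᵢ, rᵢ⟩ = J(qᵢ, pᵢ) + ητ (H(pᵢ) - H(qᵢ) - KL(qᵢ‖pᵢ))`, so the entropy terms cancel up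
to `-ητ KL(qᵢ‖pᵢ)`. Bounding both KL terms by `J` and using that `J` is additive over product
distributions gives the claim.
-/

section ProductPolicy

variable {N : ℕ} {A : Type*} [Fintype A]

theorem jointPmf_nonneg {p : Fin N → A → ℝ} (hp : ∀ i x, 0 ≤ p i x) (a : Fin N → A) :
    0 ≤ jointPmf p a :=
  prod_nonneg fun i _ => hp i (a i)

theorem sum_jointPmf (p : Fin N → A → ℝ) : ∑ a, jointPmf p a = ∏ i, ∑ x, p i x :=
  (Fintype.prod_sum p).symm

theorem expVal_const {p : Fin N → A → ℝ} (hp : ∀ i, ∑ x, p i x = 1) (c : ℝ) :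
    expVal p (fun _ => c) = c := by
  simp [expVal, ← sum_mul, sum_jointPmf, hp]

theorem expVal_sum {ι : Type*} (s : Finset ι) (p : Fin N → A → ℝ)
    (f : ι → (Fin N → A) → ℝ) : expVal p (fun a => ∑ k ∈ s, f k a) = ∑ k ∈ s, expVal p (f k) := by
  simp only [expVal, mul_sum]
  exact sum_comm

theorem expVal_sub (p : Fin N → A → ℝ) (f g : (Fin N → A) → ℝ) :
    expVal p (f - g) = expVal p f - expVal p g := by
  simp only [expVal, Pi.sub_apply, mul_sub, sum_sub_distrib]

theorem expVal_le_of_le {p : Fin N → A → ℝ} (hp : ∀ i, IsDist (p i))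
    {f : (Fin N → A) → ℝ} {M : ℝ} (hf : ∀ a, f a ≤ M) : expVal p f ≤ M := by
  calc expVal p f ≤ expVal p (fun _ => M) :=
        sum_le_sum fun a _ =>
          mul_le_mul_of_nonneg_left (hf a) (jointPmf_nonneg (fun i => (hp i).1) a)
    _ = M := expVal_const (fun i => (hp i).2) M

theorem jointPmf_eq_mul_exp {p q : Fin N → A → ℝ} (hp : ∀ i x, 0 < p i x) (hq : ∀ i x, 0 < q i x)
    (a : Fin N → A) :
    jointPmf q a
      = jointPmf p a * Real.exp (∑ i, (Real.log (q i (a i)) - Real.log (p i (a i)))) := by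
  simp only [jointPmf, Real.exp_sum, ← prod_mul_distrib, Real.exp_sub,
    Real.exp_log (hq _ _), Real.exp_log (hp _ _)]
  exact prod_congr rfl fun i _ => by field_simp [(hp i (a i)).ne']

theorem jointPmf_update (p : Fin N → A → ℝ) (i : Fin N) (w : A → ℝ) (a : Fin N → A) :
    jointPmf (Function.update p i w) a = w (a i) * ∏ j ∈ univ.erase i, p j (a j) := by
  rw [jointPmf, ← mul_prod_erase univ _ (mem_univ i), Function.update_self]
  exact congrArg _ (prod_congr rfl fun j hj => by rw [Function.update_of_ne (ne_of_mem_erase hj)])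

variable [DecidableEq A]

/-- Expectation of `f` when agent `i` switches to the pure action `b`; `margU u p i` is
`condExpVal p (u i) i` by definition. -/
def condExpVal (p : Fin N → A → ℝ) (f : (Fin N → A) → ℝ) (i : Fin N) (b : A) : ℝ :=
  expVal (Function.update p i (pmfOf b)) f

theorem isDist_pmfOf (b : A) : IsDist (pmfOf b) :=
  ⟨fun x => by unfold pmfOf; split_ifs <;> norm_num, by simp [pmfOf]⟩

theorem condExpVal_le {p : Fin N → A → ℝ} (hp : ∀ i, IsDist (p i)) {f : (Fin N → A) → ℝ} {M : ℝ}
    (hf : ∀ a, f a ≤ M) (i : Fin N) (b : A) : condExpVal p f i b ≤ M :=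
  expVal_le_of_le ((Function.forall_update_iff p (fun _ w => IsDist w)).2
    ⟨isDist_pmfOf b, fun j _ => hp j⟩) hf

theorem expVal_mul_apply (p : Fin N → A → ℝ) (i : Fin N) (g : A → ℝ) (f : (Fin N → A) → ℝ) :
    expVal p (fun a => g (a i) * f a) = ∑ b, p i b * g b * condExpVal p f i b := by
  simp only [condExpVal, expVal, jointPmf_update, pmfOf, mul_sum]
  rw [sum_comm]
  refine sum_congr rfl fun a _ => ?_
  simp only [ite_mul, one_mul, zero_mul, mul_ite, mul_zero, sum_ite_eq, mem_univ, if_true]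
  rw [← Function.update_eq_self i p, jointPmf_update, Function.update_eq_self]
  ring

theorem expVal_apply {p : Fin N → A → ℝ} (hp : ∀ i, ∑ x, p i x = 1) (i : Fin N) (g : A → ℝ) :
    expVal p (fun a => g (a i)) = ∑ b, p i b * g b := by
  have hcond : ∀ b, condExpVal p (fun _ => 1) i b = 1 := fun b =>
    expVal_const ((Function.forall_update_iff p (fun _ w => ∑ x, w x = 1)).2
      ⟨(isDist_pmfOf b).2, fun j _ => hp j⟩) 1
  simpa [hcond] using expVal_mul_apply p i g (fun _ => 1)

theorem condExpVal_eq_of_update_invariant (p : Fin N → A → ℝ) (i : Fin N)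
    {f : (Fin N → A) → ℝ} (hf : ∀ a x, f (Function.update a i x) = f a) (b c : A) :
    condExpVal p f i b = condExpVal p f i c := by
  set σ := Equiv.swap b c
  have hinv : Function.Involutive fun a : Fin N → A => Function.update a i (σ (a i)) := by
    intro a; simp [σ]
  refine Fintype.sum_bijective _ hinv.bijective _ _ fun a => ?_
  have hσ : pmfOf c (σ (a i)) = pmfOf b (a i) := by
    simp only [pmfOf, σ, Equiv.swap_apply_eq_iff, Equiv.swap_apply_right]
  simp only [jointPmf_update, Function.update_self, hσ, hf]
  congr 2
  exact prod_congr rfl fun j hj => by rw [Function.update_of_ne (ne_of_mem_erase hj)]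

end ProductPolicy

section Divergences

variable {A : Type*} [Fintype A]

theorem mul_log_sub_log_le {x y : ℝ} (hx : 0 < x) (hy : 0 < y) :
    x * (Real.log y - Real.log x) ≤ y - x := by
  have h := Real.log_le_sub_one_of_pos (div_pos hy hx)
  rw [Real.log_div hy.ne' hx.ne'] at h
  calc x * (Real.log y - Real.log x) ≤ x * (y / x - 1) := mul_le_mul_of_nonneg_left h hx.le
    _ = y - x := by field_simp

theorem KLdiv_nonneg {p q : A → ℝ} (hp : ∀ a, 0 < p a) (hq : ∀ a, 0 < q a)
    (hpq : ∑ a, p a = ∑ a, q a) : 0 ≤ KLdiv p q :=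
  calc (0 : ℝ) = ∑ a, (p a - q a) := by rw [sum_sub_distrib, hpq, sub_self]
    _ ≤ KLdiv p q := sum_le_sum fun a _ => by
        have := mul_log_sub_log_le (hp a) (hq a)
        linarith

theorem sum_sub_mul_le_sum_mul_log_add {x y φ : A → ℝ} {M : ℝ} (hx : ∀ a, 0 < x a)
    (hy : ∀ a, 0 < y a) (hxy : ∑ a, x a = ∑ a, y a) (hφ : ∀ a, φ a ≤ M) :
    ∑ a, (y a - x a) * φ a
      ≤ ∑ a, x a * (Real.log (y a) - Real.log (x a)) * φ a + M * KLdiv x y := by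
  have hKL : M * KLdiv x y
      = ∑ a, (y a - x a - x a * (Real.log (y a) - Real.log (x a))) * M := by
    rw [← sum_mul, sum_sub_distrib, sum_sub_distrib, hxy, KLdiv]
    simp only [mul_sub, sum_sub_distrib]
    ring
  rw [hKL, ← sum_add_distrib]
  refine sum_le_sum fun a _ => ?_
  have := mul_log_sub_log_le (hx a) (hy a)
  nlinarith [hφ a]

theorem sum_sub_mul_eq_of_log_eq {x y r : A → ℝ} {κ c : ℝ} (hxy : ∑ a, x a = ∑ a, y a)
    (hr : ∀ a, r a = Real.log (y a) - Real.log (x a) + κ * Real.log (x a) + c) :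
    ∑ a, (y a - x a) * r a = Jdiv y x + κ * (entropy x - entropy y - KLdiv y x) := by
  have hc : ∑ a, (y a - x a) * c = 0 := by rw [← sum_mul, sum_sub_distrib, hxy, sub_self, zero_mul]
  simp only [hr, Jdiv, KLdiv, entropy, mul_sub, mul_neg, mul_sum, ← sum_add_distrib,
    ← sum_sub_distrib, ← sum_neg_distrib]
  rw [← sub_eq_zero, ← sum_sub_distrib, ← hc]
  exact sum_congr rfl fun a _ => by ring

theorem mul_Jdiv_le_of_log_eq {x y r : A → ℝ} {η τ M c : ℝ} (hη : 0 < η) (hτ : 0 ≤ τ)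
    (hM : 0 ≤ M) (hx : ∀ a, 0 < x a) (hy : ∀ a, 0 < y a) (hxy : ∑ a, x a = ∑ a, y a)
    (hr : ∀ a, η * r a = Real.log (y a) - Real.log (x a) + η * τ * Real.log (x a) + c) :
    (1 / η - 2 * M - τ) * Jdiv y x
      ≤ ∑ a, (y a - x a) * r a - M * KLdiv x y + τ * (entropy y - entropy x) := by
  have hid := sum_sub_mul_eq_of_log_eq hxy hr
  simp only [mul_left_comm _ η, ← mul_sum] at hid
  have hyx := KLdiv_nonneg hy hx hxy.symm
  have hxy' := KLdiv_nonneg hx hy hxy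
  refine le_of_mul_le_mul_left ?_ hη
  rw [show η * ((1 / η - 2 * M - τ) * Jdiv y x) = (1 - 2 * M * η - τ * η) * Jdiv y x by
    field_simp]
  unfold Jdiv at hid ⊢
  linarith [mul_nonneg (mul_nonneg hη.le hM) hyx, mul_nonneg (mul_nonneg hη.le hM) hxy',
    mul_nonneg (mul_nonneg hη.le hτ) hxy']

theorem sum_mul_eq_sum_mul_of_sub_eq {d r s : A → ℝ} (hd : ∑ a, d a = 0)
    (h : ∀ a b, r a - s a = r b - s b) : ∑ a, d a * r a = ∑ a, d a * s a := by
  rcases isEmpty_or_nonempty A with _ | ⟨⟨b⟩⟩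
  · simp
  · rw [← sub_eq_zero, ← sum_sub_distrib]
    calc ∑ a, (d a * r a - d a * s a) = ∑ a, d a * (r b - s b) :=
          sum_congr rfl fun a _ => by rw [← h a b]; ring
      _ = 0 := by rw [← sum_mul, hd, zero_mul]

end Divergences

section PotentialGame

variable {N : ℕ} {A : Type*} [Fintype A]

theorem KLdiv_jointPmf {p q : Fin N → A → ℝ} (hp : ∀ i a, 0 < p i a) (hq : ∀ i a, 0 < q i a)
    (hq1 : ∀ i, ∑ a, q i a = 1) :
    KLdiv (jointPmf q) (jointPmf p) = ∑ i, KLdiv (q i) (p i) := by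
  classical
  have hlog : ∀ a : Fin N → A, Real.log (jointPmf q a) - Real.log (jointPmf p a)
      = ∑ i, (Real.log (q i (a i)) - Real.log (p i (a i))) := fun a => by
    have hpa : 0 < jointPmf p a := prod_pos fun i _ => hp i (a i)
    rw [jointPmf_eq_mul_exp hp hq a, Real.log_mul hpa.ne' (Real.exp_pos _).ne', Real.log_exp,
      add_sub_cancel_left]
  calc KLdiv (jointPmf q) (jointPmf p)
      = expVal q (fun a => ∑ i, (Real.log (q i (a i)) - Real.log (p i (a i)))) :=
        sum_congr rfl fun a _ => by rw [hlog]
    _ = ∑ i, KLdiv (q i) (p i) := by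
        rw [expVal_sum]
        exact sum_congr rfl fun i _ =>
          expVal_apply hq1 i fun b => Real.log (q i b) - Real.log (p i b)

theorem Jdiv_jointPmf {p q : Fin N → A → ℝ} (hp : ∀ i a, 0 < p i a) (hq : ∀ i a, 0 < q i a)
    (hp1 : ∀ i, ∑ a, p i a = 1) (hq1 : ∀ i, ∑ a, q i a = 1) :
    Jdiv (jointPmf q) (jointPmf p) = ∑ i, Jdiv (q i) (p i) := by
  rw [Jdiv, KLdiv_jointPmf hp hq hq1, KLdiv_jointPmf hq hp hp1, ← sum_add_distrib]
  rfl

variable [DecidableEq A]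

theorem expVal_add_sum_mul_condExpVal_le {p q : Fin N → A → ℝ} (hp : ∀ i a, 0 < p i a)
    (hq : ∀ i a, 0 < q i a) {f : (Fin N → A) → ℝ} (hf : ∀ a, 0 ≤ f a) :
    expVal p f + ∑ i, ∑ b, p i b * (Real.log (q i b) - Real.log (p i b)) * condExpVal p f i b
      ≤ expVal q f := by
  set L : (Fin N → A) → ℝ := fun a => ∑ i, (Real.log (q i (a i)) - Real.log (p i (a i)))
  have hsum : ∑ i, ∑ b, p i b * (Real.log (q i b) - Real.log (p i b)) * condExpVal p f i b
      = expVal p (fun a => L a * f a) := by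
    simp only [← expVal_mul_apply, L, sum_mul]
    exact (expVal_sum _ _ _).symm
  rw [hsum, expVal, expVal, ← sum_add_distrib]
  refine sum_le_sum fun a _ => ?_
  rw [jointPmf_eq_mul_exp hp hq a]
  -- `q = p · exp L` pointwise, and `1 + L ≤ exp L`
  have hexp := Real.add_one_le_exp (L a)
  have hpf := mul_nonneg (jointPmf_nonneg (fun i b => (hp i b).le) a) (hf a)
  nlinarith [mul_le_mul_of_nonneg_left hexp hpf]

theorem margU_sub_condExpVal_eq {u : Fin N → (Fin N → A) → ℝ} {Φ : (Fin N → A) → ℝ}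
    (hpot : IsPotential u Φ) (p : Fin N → A → ℝ) (i : Fin N) (b c : A) :
    margU u p i b - condExpVal p Φ i b = margU u p i c - condExpVal p Φ i c := by
  have hsub : ∀ b, margU u p i b - condExpVal p Φ i b = condExpVal p (u i - Φ) i b :=
    fun b => (expVal_sub _ _ _).symm
  rw [hsub, hsub]
  refine condExpVal_eq_of_update_invariant p i (fun a x => ?_) b c
  have := hpot i a x
  simp only [Pi.sub_apply]
  linarith

theorem sum_mul_margU_sub_le_expVal_sub {u : Fin N → (Fin N → A) → ℝ} {Φ : (Fin N → A) → ℝ}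
    (hpot : IsPotential u Φ) {Φmax : ℝ} (hΦ0 : ∀ a, 0 ≤ Φ a) (hΦM : ∀ a, Φ a ≤ Φmax)
    {p q : Fin N → A → ℝ} (hp : ∀ i a, 0 < p i a) (hq : ∀ i a, 0 < q i a)
    (hp1 : ∀ i, ∑ a, p i a = 1) (hq1 : ∀ i, ∑ a, q i a = 1) :
    ∑ i, (∑ b, (q i b - p i b) * margU u p i b - Φmax * KLdiv (p i) (q i))
      ≤ expVal q Φ - expVal p Φ := by
  have hagent : ∀ i, ∑ b, (q i b - p i b) * margU u p i b - Φmax * KLdiv (p i) (q i)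
      ≤ ∑ b, p i b * (Real.log (q i b) - Real.log (p i b)) * condExpVal p Φ i b := fun i => by
    have hpq : ∑ b, p i b = ∑ b, q i b := by rw [hp1, hq1]
    rw [sum_mul_eq_sum_mul_of_sub_eq (by rw [sum_sub_distrib, hpq, sub_self])
      (margU_sub_condExpVal_eq hpot p i)]
    have := sum_sub_mul_le_sum_mul_log_add (hp i) (hq i) hpq
      (condExpVal_le (fun j => ⟨fun a => (hp j a).le, hp1 j⟩) hΦM i)
    linarith
  have := expVal_add_sum_mul_condExpVal_le hp hq hΦ0
  linarith [sum_le_sum fun i (_ : i ∈ univ) => hagent i]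

end PotentialGame

section NPG

variable {N : ℕ} {A : Type*} [Fintype A] [DecidableEq A]
  (u : Fin N → (Fin N → A) → ℝ) (τ η : ℝ)

def npgWeight (p : Fin N → A → ℝ) (i : Fin N) (a : A) : ℝ :=
  p i a ^ (1 - η * τ) * Real.exp (η * margU u p i a)

def npgUpdate (p : Fin N → A → ℝ) (i : Fin N) (a : A) : ℝ :=
  npgWeight u τ η p i a / ∑ a', npgWeight u τ η p i a'

variable {u τ η}

theorem NPGstep.eq_npgUpdate {π : ℕ → Fin N → A → ℝ} (hstep : NPGstep u τ η π) (t : ℕ) :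
    π (t + 1) = npgUpdate u τ η (π t) :=
  funext fun i => funext fun a => hstep t i a

variable {p : Fin N → A → ℝ}

theorem npgWeight_pos (hp : ∀ i a, 0 < p i a) (i : Fin N) (a : A) : 0 < npgWeight u τ η p i a :=
  mul_pos (Real.rpow_pos_of_pos (hp i a) _) (Real.exp_pos _)

theorem npgUpdate_pos [Nonempty A] (hp : ∀ i a, 0 < p i a) (i : Fin N) (a : A) :
    0 < npgUpdate u τ η p i a :=
  div_pos (npgWeight_pos hp i a) (sum_pos (fun b _ => npgWeight_pos hp i b) univ_nonempty)

theorem sum_npgUpdate [Nonempty A] (hp : ∀ i a, 0 < p i a) (i : Fin N) :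
    ∑ a, npgUpdate u τ η p i a = 1 := by
  simp only [npgUpdate]
  rw [← sum_div, div_self (sum_pos (fun b _ => npgWeight_pos hp i b) univ_nonempty).ne']

theorem mul_margU_eq_log_npgUpdate [Nonempty A] (hp : ∀ i a, 0 < p i a) (i : Fin N) (a : A) :
    η * margU u p i a = Real.log (npgUpdate u τ η p i a) - Real.log (p i a)
      + η * τ * Real.log (p i a) + Real.log (∑ b, npgWeight u τ η p i b) := by
  have hZ := sum_pos (fun b _ => npgWeight_pos (u := u) (τ := τ) (η := η) hp i b) univ_nonempty
  rw [npgUpdate, Real.log_div (npgWeight_pos hp i a).ne' hZ.ne', npgWeight,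
    Real.log_mul (Real.rpow_pos_of_pos (hp i a) _).ne' (Real.exp_pos _).ne',
    Real.log_rpow (hp i a), Real.log_exp]
  ring

theorem NPGstep.pos_and_sum_eq_one [Nonempty A] {π : ℕ → Fin N → A → ℝ}
    (hstep : NPGstep u τ η π) (hpos : ∀ i a, 0 < π 0 i a) (hsum : ∀ i, ∑ a, π 0 i a = 1) :
    ∀ t, (∀ i a, 0 < π t i a) ∧ ∀ i, ∑ a, π t i a = 1
  | 0 => ⟨hpos, hsum⟩
  | t + 1 => by
    rw [hstep.eq_npgUpdate t]
    have hp := (hstep.pos_and_sum_eq_one hpos hsum t).1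
    exact ⟨npgUpdate_pos hp, sum_npgUpdate hp⟩

end NPG

theorem mul_Jdiv_le_regPot_npgUpdate_sub {N : ℕ} {A : Type*} [Fintype A] [DecidableEq A]
    [Nonempty A] {u : Fin N → (Fin N → A) → ℝ} {Φ : (Fin N → A) → ℝ} (hpot : IsPotential u Φ)
    {Φmax : ℝ} (hΦ0 : ∀ a, 0 ≤ Φ a) (hΦM : ∀ a, Φ a ≤ Φmax) {τ η : ℝ} (hτ : 0 ≤ τ)
    (hη : 0 < η) {p : Fin N → A → ℝ} (hp : ∀ i a, 0 < p i a) (hp1 : ∀ i, ∑ a, p i a = 1) :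
    (1 / η - 2 * Φmax - τ) * Jdiv (jointPmf (npgUpdate u τ η p)) (jointPmf p)
      ≤ regPot Φ τ (npgUpdate u τ η p) - regPot Φ τ p := by
  set q := npgUpdate u τ η p
  have hq : ∀ i a, 0 < q i a := npgUpdate_pos hp
  have hq1 : ∀ i, ∑ a, q i a = 1 := sum_npgUpdate hp
  have hΦmax : 0 ≤ Φmax := (hΦ0 (Classical.arbitrary _)).trans (hΦM _)
  have hagent : ∀ i, (1 / η - 2 * Φmax - τ) * Jdiv (q i) (p i)
      ≤ ∑ b, (q i b - p i b) * margU u p i b - Φmax * KLdiv (p i) (q i)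
        + τ * (entropy (q i) - entropy (p i)) := fun i =>
    mul_Jdiv_le_of_log_eq hη hτ hΦmax (hp i) (hq i) (by rw [hp1, hq1])
      (mul_margU_eq_log_npgUpdate hp i)
  have hpot_bound := sum_mul_margU_sub_le_expVal_sub hpot hΦ0 hΦM hp hq hp1 hq1
  rw [Jdiv_jointPmf hp hq hp1 hq1, mul_sum]
  calc ∑ i, (1 / η - 2 * Φmax - τ) * Jdiv (q i) (p i)
      ≤ ∑ i, (∑ b, (q i b - p i b) * margU u p i b - Φmax * KLdiv (p i) (q i)
          + τ * (entropy (q i) - entropy (p i))) := sum_le_sum fun i _ => hagent i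
    _ = ∑ i, (∑ b, (q i b - p i b) * margU u p i b - Φmax * KLdiv (p i) (q i))
          + τ * (∑ i, entropy (q i) - ∑ i, entropy (p i)) := by
        rw [sum_add_distrib, ← mul_sum, ← sum_sub_distrib]
    _ ≤ regPot Φ τ q - regPot Φ τ p := by
        unfold regPot
        linarith

theorem potential_improvement_phimax_general
    {N : ℕ} {A : Type*} [Fintype A] [DecidableEq A] [Nonempty A]
    (u : Fin N → (Fin N → A) → ℝ)
    (Φ : (Fin N → A) → ℝ) (Φmax : ℝ) (hΦ : ∀ a, 0 ≤ Φ a ∧ Φ a ≤ Φmax)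
    (hpot : IsPotential u Φ)
    (τ η : ℝ) (hτ : 0 < τ) (hη : 0 < η)
    (π : ℕ → Fin N → A → ℝ)
    (hdist : ∀ i, IsDist (π 0 i)) (hpos : ∀ i a, 0 < π 0 i a)
    (hstep : NPGstep u τ η π) :
    ∀ t : ℕ,
      regPot Φ τ (π (t + 1)) - regPot Φ τ (π t) ≥
        (1 / η - 2 * Φmax - τ) * Jdiv (jointPmf (π (t + 1))) (jointPmf (π t)) := by
  intro t
  obtain ⟨hp, hp1⟩ := hstep.pos_and_sum_eq_one hpos (fun i => (hdist i).2) t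
  rw [hstep.eq_npgUpdate t]
  exact mul_Jdiv_le_regPot_npgUpdate_sub hpot (fun a => (hΦ a).1) (fun a => (hΦ a).2) hτ.le hη
    hp hp1

/-- Performance improvement of the regularized potential under independent NPG. -/
theorem potential_improvement_phimax
    {N : ℕ} (hN : 0 < N) {A : Type*} [Fintype A] [DecidableEq A] [Nonempty A]
    (u : Fin N → (Fin N → A) → ℝ) (hu : ∀ i a, 0 ≤ u i a ∧ u i a ≤ 1)
    (Φ : (Fin N → A) → ℝ) (Φmax : ℝ) (hΦ : ∀ a, 0 ≤ Φ a ∧ Φ a ≤ Φmax)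
    (hpot : IsPotential u Φ)
    (τ η : ℝ) (hτ : 0 < τ) (hη : 0 < η)
    (π : ℕ → Fin N → A → ℝ)
    (hdist : ∀ i, IsDist (π 0 i)) (hpos : ∀ i a, 0 < π 0 i a)
    (hstep : NPGstep u τ η π) :
    ∀ t : ℕ,
      regPot Φ τ (π (t + 1)) - regPot Φ τ (π t) ≥
        (1 / η - 2 * Φmax - τ) * Jdiv (jointPmf (π (t + 1))) (jointPmf (π t)) :=
  potential_improvement_phimax_general u Φ Φmax hΦ hpot τ η hτ hη π hdist hpos hstep
end
end

section
/- Let π and π' be two everywhere-positive product policies on 𝒜^N and let Φ : 𝒜^N → ℝ satisfy 0 ≤ Φ(a) ≤ Φ_max for all a. Then |Φ(π') − Φ(π) − Σ_{i=1}^N (Φ(π_i', π_{-i}) − Φ(π))| ≤ 2 Φ_max · J(π', π), where Φ(π_i', π_{-i}) denotes the expectation of Φ under the product policy obtained from π by replacing π_i with π_i'. -/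
open Finset

noncomputable section

/-!
Fix `a` and put `x j = π' j (a j) / π j (a j)`. Then `π'(a) = π(a) ∏ x j` and
`(π'_i, π_{-i})(a) = π(a) x i`, so the error of the expansion at `a` is
`π(a) (∏ x - 1 - ∑ (x j - 1)) = π(a) (φ(∏ x) - ∑ φ(x j))` with `φ t = t - 1 - log t`.
As `0 ≤ φ t ≤ (t - 1) log t`, it is at most
`π(a) ((∏ x - 1) log ∏ x + ∑ (x j - 1) log (x j))`.
Weighted by `0 ≤ Φ ≤ Φmax` and summed over `a`, the first term gives `J(π', π)` and the
`j`-th term gives `J(π'_j, π_j)`; these add up to `J(π', π)` again, because the Jeffrey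
divergence of product distributions is the sum of the Jeffrey divergences of the factors.
-/

namespace Real

lemma sub_one_le_mul_log {t : ℝ} (ht : 0 < t) : t - 1 ≤ t * log t := by
  have h := mul_le_mul_of_nonneg_left (one_sub_inv_le_log_of_pos ht) ht.le
  rwa [mul_sub, mul_one, mul_inv_cancel₀ ht.ne'] at h

lemma sub_one_sub_log_nonneg {t : ℝ} (ht : 0 < t) : 0 ≤ t - 1 - log t := by
  linarith [log_le_sub_one_of_pos ht]

lemma sub_one_sub_log_le_sub_one_mul_log {t : ℝ} (ht : 0 < t) :
    t - 1 - log t ≤ (t - 1) * log t := by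
  linarith [sub_one_le_mul_log ht, sub_mul t 1 (log t)]

end Real

open Real (log log_div log_mul log_prod sub_one_sub_log_nonneg
  sub_one_sub_log_le_sub_one_mul_log)

lemma abs_prod_sub_one_sub_sum_le {ι : Type*} [Fintype ι] {x : ι → ℝ} (hx : ∀ i, 0 < x i) :
    |∏ i, x i - 1 - ∑ i, (x i - 1)| ≤
      (∏ i, x i - 1) * log (∏ i, x i) + ∑ i, (x i - 1) * log (x i) := by
  have hP : 0 < ∏ i, x i := prod_pos fun i _ ↦ hx i
  have hφ : ∏ i, x i - 1 - ∑ i, (x i - 1) =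
      (∏ i, x i - 1 - log (∏ i, x i)) - ∑ i, (x i - 1 - log (x i)) := by
    rw [log_prod fun i _ ↦ (hx i).ne']
    simp only [sum_sub_distrib]
    ring
  have hφP_nonneg := sub_one_sub_log_nonneg hP
  have hφP_le := sub_one_sub_log_le_sub_one_mul_log hP
  have hφx_nonneg : 0 ≤ ∑ i, (x i - 1 - log (x i)) :=
    sum_nonneg fun i _ ↦ sub_one_sub_log_nonneg (hx i)
  have hφx_le : ∑ i, (x i - 1 - log (x i)) ≤ ∑ i, (x i - 1) * log (x i) :=
    sum_le_sum fun i _ ↦ sub_one_sub_log_le_sub_one_mul_log (hx i)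
  rw [hφ, abs_le]
  constructor <;> linarith

lemma abs_sum_mul_le_sum_mul {ι : Type*} [Fintype ι] {d B f : ι → ℝ} {M : ℝ}
    (hd : ∀ a, |d a| ≤ B a) (hf : ∀ a, 0 ≤ f a ∧ f a ≤ M) :
    |∑ a, d a * f a| ≤ (∑ a, B a) * M := by
  rw [sum_mul]
  refine (abs_sum_le_sum_abs _ _).trans (sum_le_sum fun a _ ↦ ?_)
  rw [abs_mul, abs_of_nonneg (hf a).1]
  exact mul_le_mul (hd a) (hf a).2 (hf a).1 ((abs_nonneg _).trans (hd a))

lemma Jdiv_eq_sum {A : Type*} [Fintype A] (p q : A → ℝ) :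
    Jdiv p q = ∑ a, (p a - q a) * (log (p a) - log (q a)) := by
  rw [Jdiv, KLdiv, KLdiv, ← sum_add_distrib]
  exact sum_congr rfl fun a _ ↦ by ring

section ProductPolicy

variable {N : ℕ} {A : Type*} [Fintype A]

lemma jointPmf_eq_mul_prod_div (π π' : Fin N → A → ℝ) (a : Fin N → A)
    (hπ : ∀ j, π j (a j) ≠ 0) :
    jointPmf π' a = jointPmf π a * ∏ j, π' j (a j) / π j (a j) := by
  rw [jointPmf, jointPmf, ← prod_mul_distrib]
  exact prod_congr rfl fun j _ ↦ (mul_div_cancel₀ _ (hπ j)).symm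

lemma jointPmf_update_eq_mul_div (π : Fin N → A → ℝ) (i : Fin N) (p : A → ℝ)
    (a : Fin N → A) (hπ : π i (a i) ≠ 0) :
    jointPmf (Function.update π i p) a = jointPmf π a * (p (a i) / π i (a i)) := by
  have h : ∀ j, Function.update π i p j (a j) =
      π j (a j) * if j = i then p (a i) / π i (a i) else 1 := by
    intro j
    rcases eq_or_ne j i with rfl | hj
    · simp [mul_div_cancel₀ _ hπ]
    · simp [hj]
  simp only [jointPmf, h, prod_mul_distrib, prod_ite_eq', mem_univ, if_true]

lemma expVal_comp_eval (π : Fin N → A → ℝ) (i : Fin N) (hπ : ∀ j ≠ i, ∑ b, π j b = 1)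
    (f : A → ℝ) :
    expVal π (fun a ↦ f (a i)) = ∑ b, π i b * f b := by
  let g : Fin N → A → ℝ := fun j b ↦ π j b * if j = i then f b else 1
  calc expVal π (fun a ↦ f (a i))
      = ∑ a : Fin N → A, ∏ j, g j (a j) := by
        simp only [expVal, jointPmf, g, prod_mul_distrib, prod_ite_eq', mem_univ, if_true]
    _ = ∏ j, ∑ b, g j b := (Fintype.prod_sum g).symm
    _ = ∑ b, g i b := prod_eq_single i (fun j _ hj ↦ by simp [g, hj, hπ j hj]) (by simp)
    _ = ∑ b, π i b * f b := by simp [g]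

lemma sum_jointPmf_sub_mul_comp_eval (π π' : Fin N → A → ℝ) (i : Fin N)
    (hπ : ∀ j ≠ i, ∑ b, π j b = 1) (hπ' : ∀ j ≠ i, ∑ b, π' j b = 1) (f : A → ℝ) :
    ∑ a : Fin N → A, (jointPmf π' a - jointPmf π a) * f (a i) =
      ∑ b, (π' i b - π i b) * f b := by
  simpa only [expVal, sub_mul, sum_sub_distrib] using
    congr_arg₂ (· - ·) (expVal_comp_eval π' i hπ' f) (expVal_comp_eval π i hπ f)

lemma Jdiv_jointPmf_s16 (π π' : Fin N → A → ℝ)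
    (hπ : ∀ j, ∑ b, π j b = 1) (hπ' : ∀ j, ∑ b, π' j b = 1)
    (hpos : ∀ j b, 0 < π j b) (hpos' : ∀ j b, 0 < π' j b) :
    Jdiv (jointPmf π') (jointPmf π) = ∑ i, Jdiv (π' i) (π i) := by
  have hlog : ∀ a : Fin N → A, log (jointPmf π' a) - log (jointPmf π a) =
      ∑ i, (log (π' i (a i)) - log (π i (a i))) := fun a ↦ by
    rw [jointPmf, jointPmf, log_prod fun j _ ↦ (hpos' j (a j)).ne',
      log_prod fun j _ ↦ (hpos j (a j)).ne', sum_sub_distrib]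
  simp only [Jdiv_eq_sum, hlog, mul_sum]
  rw [sum_comm]
  exact sum_congr rfl fun i _ ↦
    sum_jointPmf_sub_mul_comp_eval π π' i (fun j _ ↦ hπ j) (fun j _ ↦ hπ' j)
      (fun b ↦ log (π' i b) - log (π i b))

lemma sum_jointPmf_update_sub_mul_log_sub (π π' : Fin N → A → ℝ) (i : Fin N)
    (hπ : ∀ j, ∑ b, π j b = 1) :
    ∑ a : Fin N → A, (jointPmf (Function.update π i (π' i)) a - jointPmf π a) *
        (log (π' i (a i)) - log (π i (a i))) = Jdiv (π' i) (π i) := by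
  rw [sum_jointPmf_sub_mul_comp_eval π _ i (fun j _ ↦ hπ j)
    (fun j hj ↦ by rw [Function.update_of_ne hj, hπ j]) (fun b ↦ log (π' i b) - log (π i b)),
    Function.update_self, Jdiv_eq_sum]

lemma expVal_sub_sub_sum_expVal_update (π π' : Fin N → A → ℝ) (f : (Fin N → A) → ℝ) :
    expVal π' f - expVal π f - ∑ i, (expVal (Function.update π i (π' i)) f - expVal π f) =
      ∑ a, (jointPmf π' a - jointPmf π a -
        ∑ i, (jointPmf (Function.update π i (π' i)) a - jointPmf π a)) * f a := by
  simp only [expVal, sub_mul, sum_sub_distrib, sum_mul]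
  rw [sum_comm (f := fun i a ↦ jointPmf (Function.update π i (π' i)) a * f a),
    sum_comm (f := fun i a ↦ jointPmf π a * f a)]

lemma abs_jointPmf_sub_sub_sum_le (π π' : Fin N → A → ℝ)
    (hpos : ∀ j b, 0 < π j b) (hpos' : ∀ j b, 0 < π' j b) (a : Fin N → A) :
    |jointPmf π' a - jointPmf π a -
        ∑ i, (jointPmf (Function.update π i (π' i)) a - jointPmf π a)| ≤
      (jointPmf π' a - jointPmf π a) * (log (jointPmf π' a) - log (jointPmf π a)) +
        ∑ i, (jointPmf (Function.update π i (π' i)) a - jointPmf π a) *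
          (log (π' i (a i)) - log (π i (a i))) := by
  have hc : 0 < jointPmf π a := prod_pos fun j _ ↦ hpos j (a j)
  have hx : ∀ j, 0 < π' j (a j) / π j (a j) := fun j ↦ div_pos (hpos' j (a j)) (hpos j (a j))
  have hlog_div : ∀ j, log (π' j (a j)) - log (π j (a j)) = log (π' j (a j) / π j (a j)) :=
    fun j ↦ (log_div (hpos' j (a j)).ne' (hpos j (a j)).ne').symm
  rw [jointPmf_eq_mul_prod_div π π' a fun j ↦ (hpos j (a j)).ne',
    log_mul hc.ne' (prod_pos fun j _ ↦ hx j).ne', add_sub_cancel_left]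
  simp only [fun i ↦ jointPmf_update_eq_mul_div π i (π' i) a (hpos i (a i)).ne', hlog_div]
  set c := jointPmf π a
  set x : Fin N → ℝ := fun j ↦ π' j (a j) / π j (a j)
  calc |c * ∏ j, x j - c - ∑ i, (c * x i - c)|
      = |c * (∏ j, x j - 1 - ∑ i, (x i - 1))| := by
        simp only [mul_sub, mul_one, mul_sum]
    _ ≤ |c| * ((∏ j, x j - 1) * log (∏ j, x j) + ∑ i, (x i - 1) * log (x i)) := by
        rw [abs_mul]
        exact mul_le_mul_of_nonneg_left (abs_prod_sub_one_sub_sum_le hx) (abs_nonneg c)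
    _ = (c * ∏ j, x j - c) * log (∏ j, x j) + ∑ i, (c * x i - c) * log (x i) := by
        rw [abs_of_pos hc, mul_add, mul_sum]
        congr 1
        · ring
        · exact sum_congr rfl fun i _ ↦ by ring

end ProductPolicy

theorem multilinear_expansion_bound_general
    {N : ℕ} {A : Type*} [Fintype A]
    (Φ : (Fin N → A) → ℝ) (Φmax : ℝ) (hΦ : ∀ a, 0 ≤ Φ a ∧ Φ a ≤ Φmax)
    (π π' : Fin N → A → ℝ)
    (hdist : ∀ i, IsDist (π i)) (hdist' : ∀ i, IsDist (π' i))
    (hpos : ∀ i a, 0 < π i a) (hpos' : ∀ i a, 0 < π' i a) :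
    |expVal π' Φ - expVal π Φ -
        ∑ i : Fin N, (expVal (Function.update π i (π' i)) Φ - expVal π Φ)| ≤
      2 * Φmax * Jdiv (jointPmf π') (jointPmf π) := by
  have hπ : ∀ j, ∑ b, π j b = 1 := fun j ↦ (hdist j).2
  have hπ' : ∀ j, ∑ b, π' j b = 1 := fun j ↦ (hdist' j).2
  rw [expVal_sub_sub_sum_expVal_update]
  refine (abs_sum_mul_le_sum_mul (abs_jointPmf_sub_sub_sum_le π π' hpos hpos') hΦ).trans_eq ?_
  rw [sum_add_distrib, ← Jdiv_eq_sum, sum_comm,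
    sum_congr rfl fun i _ ↦ sum_jointPmf_update_sub_mul_log_sub π π' i hπ,
    ← Jdiv_jointPmf_s16 π π' hπ hπ' hpos hpos']
  ring

/-- Second-order error of the multilinear expansion of `Φ(π)` is controlled by the
Jeffrey divergence. -/
theorem multilinear_expansion_bound
    {N : ℕ} (hN : 0 < N) {A : Type*} [Fintype A] [DecidableEq A] [Nonempty A]
    (Φ : (Fin N → A) → ℝ) (Φmax : ℝ) (hΦ : ∀ a, 0 ≤ Φ a ∧ Φ a ≤ Φmax)
    (π π' : Fin N → A → ℝ)
    (hdist : ∀ i, IsDist (π i)) (hdist' : ∀ i, IsDist (π' i))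
    (hpos : ∀ i a, 0 < π i a) (hpos' : ∀ i a, 0 < π' i a) :
    |expVal π' Φ - expVal π Φ -
        ∑ i : Fin N, (expVal (Function.update π i (π' i)) Φ - expVal π Φ)| ≤
      2 * Φmax * Jdiv (jointPmf π') (jointPmf π) :=
  multilinear_expansion_bound_general Φ Φmax hΦ π π' hdist hdist' hpos hpos'
end
end
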